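/- Fix initial data (s₀,i₀) ∈ B with i₀ > 0. For each finite T, let u_T be an optimal control of the finite-horizon problem P^T_{λ₁,λ₂} (minimizing ∫₀^T (λ₁·u + λ₂·i^u) dt among controls with i^u ≤ i_M on [0,T]), extended by 0 on (T,∞). If (T_n) is a sequence with T_n → ∞ such that u_{T_n} converges weakly* in L^∞(0,∞) to some control u, then u is an optimal control for the infinite-horizon problem P^∞_{λ₁,λ₂}. -/

import Mathlib

open MeasureTheory Filter Set intervalIntegral
open scoped ENNReal

noncomputable section

/-- A control: a measurable (essentially bounded) function with values in `[0, umax]`. -/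
def IsControl (umax : ℝ) (u : ℝ → ℝ) : Prop :=
  Measurable u ∧ ∀ t : ℝ, u t ∈ Set.Icc (0 : ℝ) umax

/-- Solution of the controlled SIR system on `[0,∞)`, in integral (i.e. locally absolutely
continuous) form: `s' = -(β-u)·s·i`, `i' = (β-u)·s·i - γ·i` a.e., `s 0 = s₀`, `i 0 = i₀`. -/
def SIRSol (β γ : ℝ) (u s i : ℝ → ℝ) (s₀ i₀ : ℝ) : Prop :=
  Continuous s ∧ Continuous i ∧
  (∀ t : ℝ, 0 ≤ t → s t = s₀ + ∫ τ in (0:ℝ)..t, -((β - u τ) * s τ * i τ)) ∧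
  (∀ t : ℝ, 0 ≤ t → i t = i₀ + ∫ τ in (0:ℝ)..t, ((β - u τ) * s τ * i τ - γ * i τ))

/-- Solution of the controlled SIR system on `[0,T]`, in integral form. -/
def SIRSolOn (β γ T : ℝ) (u s i : ℝ → ℝ) (s₀ i₀ : ℝ) : Prop :=
  ContinuousOn s (Set.Icc 0 T) ∧ ContinuousOn i (Set.Icc 0 T) ∧
  (∀ t ∈ Set.Icc (0:ℝ) T, s t = s₀ + ∫ τ in (0:ℝ)..t, -((β - u τ) * s τ * i τ)) ∧
  (∀ t ∈ Set.Icc (0:ℝ) T, i t = i₀ + ∫ τ in (0:ℝ)..t, ((β - u τ) * s τ * i τ - γ * i τ))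

/-- The triangle `T = {(s,i) ∈ (0,1]² : s + i ≤ 1}`. -/
def Triangle : Set (ℝ × ℝ) :=
  {p | 0 < p.1 ∧ p.1 ≤ 1 ∧ 0 < p.2 ∧ p.2 ≤ 1 ∧ p.1 + p.2 ≤ 1}

/-- The curve `Φ_max`. -/
def PhiMax (β γ umax iM : ℝ) (x : ℝ) : ℝ :=
  if x < γ / (β - umax) then iM
  else γ / (β - umax) + iM - x + (γ / (β - umax)) * (Real.log x - Real.log (γ / (β - umax)))

/-- The curve `Φ₀`. -/
def Phi0 (β γ iM : ℝ) (x : ℝ) : ℝ :=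
  if x < γ / β then iM
  else γ / β + iM - x + (γ / β) * (Real.log x - Real.log (γ / β))

/-- The ICU (state) constraint `i(t) ≤ i_M` for all `t ≥ 0`. -/
def Admissible (iM : ℝ) (i : ℝ → ℝ) : Prop := ∀ t : ℝ, 0 ≤ t → i t ≤ iM

/-- Infinite-horizon cost `J^∞(u) = ∫₀^∞ (λ₁ u + λ₂ i) dt`, with values in `[0,∞]`. -/
def Cost (l1 l2 : ℝ) (u i : ℝ → ℝ) : ℝ≥0∞ :=
  ∫⁻ t in Set.Ioi (0:ℝ), ENNReal.ofReal (l1 * u t + l2 * i t)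

/-- Finite-horizon cost `J^T(u) = ∫₀^T (λ₁ u + λ₂ i) dt`. -/
def CostT (l1 l2 T : ℝ) (u i : ℝ → ℝ) : ℝ≥0∞ :=
  ∫⁻ t in Set.Ioc (0:ℝ) T, ENNReal.ofReal (l1 * u t + l2 * i t)

/-- The safe (no-effort) zone `A`. -/
def SafeZone (β γ iM : ℝ) : Set (ℝ × ℝ) :=
  {p | p ∈ Triangle ∧ ∃ s i : ℝ → ℝ,
    SIRSol β γ (fun _ => 0) s i p.1 p.2 ∧ Admissible iM i}

/-- The viable (feasible) set `B`. -/
def ViableSet (β γ umax iM : ℝ) : Set (ℝ × ℝ) :=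
  {p | p ∈ Triangle ∧ ∃ u s i : ℝ → ℝ, IsControl umax u ∧
    SIRSol β γ u s i p.1 p.2 ∧ Admissible iM i}

/-- Weak* convergence in `L^∞(0,∞)`: testing against every `L¹` function. -/
def WeakStarLim (un : ℕ → ℝ → ℝ) (u : ℝ → ℝ) : Prop :=
  ∀ g : ℝ → ℝ, MeasureTheory.IntegrableOn g (Set.Ioi 0) →
    Filter.Tendsto (fun n => ∫ t in Set.Ioi (0:ℝ), un n t * g t) Filter.atTop
      (nhds (∫ t in Set.Ioi (0:ℝ), u t * g t))

/-!
Trajectories starting in the triangle stay there, and two trajectories with the same initial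
data satisfy a Grönwall inequality whose forcing term is `∫₀^t (u₁ - u₂) s₂ i₂`. Taking for
`(s₂, i₂)` the trajectory of the weak* limit `u`, the forcing is `u₁ ↦ ∫ u₁ g` for a fixed `L¹`
function `g`, so it tends to zero along `u_{T_n}`: hence `i_{T_n} → i` pointwise, which gives
`i ≤ i_M` and the convergence of the costs `J^M` on every fixed window `[0, M]`. For an admissible
`v`, `J^M(u) = lim J^M(u_{T_n}) ≤ J^{T_n}(u_{T_n}) ≤ J^{T_n}(v) ≤ J^∞(v)` eventually, and
`J^∞(u) = sup_M J^M(u)`.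
-/

open scoped Topology

theorem integral_gronwall_le {f φ : ℝ → ℝ} {K T : ℝ} (hK : 0 ≤ K) (hT : 0 ≤ T)
    (hf : Continuous f) (hφ : Continuous φ) (hφ0 : ∀ r, 0 ≤ φ r)
    (h : ∀ r ∈ Icc 0 T, f r ≤ K * (∫ σ in (0:ℝ)..r, f σ) + φ r) :
    f T ≤ K * Real.exp (K * T) * (∫ σ in (0:ℝ)..T, φ σ) + φ T := by
  set F := fun r => ∫ σ in (0:ℝ)..r, f σ
  set G := fun r => Real.exp (-(K * r)) * F r - ∫ σ in (0:ℝ)..r, φ σ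
  have hG : ∀ r, HasDerivAt G
      (Real.exp (-(K * r)) * (f r - K * F r) - φ r) r := by
    intro r
    have hexp : HasDerivAt (fun r => Real.exp (-(K * r))) (-K * Real.exp (-(K * r))) r := by
      simpa [mul_comm] using ((hasDerivAt_id r).const_mul K).neg.exp
    exact ((hexp.mul (hf.integral_hasStrictDerivAt 0 r).hasDerivAt).sub
      (hφ.integral_hasStrictDerivAt 0 r).hasDerivAt).congr_deriv (by ring)
  have hG_anti : AntitoneOn G (Icc 0 T) := by
    refine antitoneOn_of_hasDerivWithinAt_nonpos (convex_Icc 0 T)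
      (fun r _ => (hG r).continuousAt.continuousWithinAt) (fun r _ => (hG r).hasDerivWithinAt)
      fun r hr => ?_
    rw [interior_Icc] at hr
    have hexp_le : Real.exp (-(K * r)) ≤ 1 := Real.exp_le_one_iff.2 (by nlinarith [hr.1])
    have hf_le : f r - K * F r ≤ φ r := by linarith [h r (Ioo_subset_Icc_self hr)]
    nlinarith [mul_le_mul_of_nonneg_left hf_le (Real.exp_pos (-(K * r))).le, hφ0 r]
  have hGT : G T ≤ G 0 := hG_anti (left_mem_Icc.2 hT) (right_mem_Icc.2 hT) hT
  have hFT : F T ≤ Real.exp (K * T) * ∫ σ in (0:ℝ)..T, φ σ := by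
    have : Real.exp (-(K * T)) * F T ≤ ∫ σ in (0:ℝ)..T, φ σ := by simpa [G, F] using hGT
    rw [Real.exp_neg, inv_mul_le_iff₀ (Real.exp_pos _)] at this
    exact this
  nlinarith [h T (right_mem_Icc.2 hT), mul_le_mul_of_nonneg_left hFT hK]

theorem eq_zero_of_integral_eq_of_abs_le {x h : ℝ → ℝ} {t C : ℝ} (hx : Continuous x)
    (ht : 0 ≤ t) (hC : 0 ≤ C) (hh : IntervalIntegrable h volume 0 t)
    (heq : ∀ r ∈ Icc 0 t, x r = x 0 + ∫ τ in (0:ℝ)..r, h τ)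
    (hbd : ∀ τ ∈ Icc 0 t, |h τ| ≤ C * |x τ|) (hxt : x t = 0) : x 0 = 0 := by
  -- Grönwall backwards in time, starting from the zero of `x` at `t`.
  have key : ∀ r ∈ Icc 0 t, |x (t - r)| ≤ C * (∫ σ in (0:ℝ)..r, |x (t - σ)|) + 0 := by
    intro r hr
    have hmem : t - r ∈ Icc 0 t := ⟨by linarith [hr.2], by linarith [hr.1]⟩
    have hdiff : x t - x (t - r) = ∫ τ in (t - r)..t, h τ := by
      rw [heq t (right_mem_Icc.2 ht), heq (t - r) hmem, add_sub_add_left_eq_sub,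
        integral_interval_sub_left hh (hh.mono_set (uIcc_subset_uIcc_left (Icc_subset_uIcc hmem)))]
    calc |x (t - r)| = |∫ τ in (t - r)..t, h τ| := by rw [← hdiff, hxt, zero_sub, abs_neg]
      _ ≤ ∫ τ in (t - r)..t, C * |x τ| := by
          rw [← Real.norm_eq_abs]
          exact norm_integral_le_of_norm_le (by linarith [hr.1])
            (ae_of_all _ fun τ hτ => hbd τ ⟨hmem.1.trans hτ.1.le, hτ.2⟩)
            ((by fun_prop : Continuous fun τ => C * |x τ|).intervalIntegrable _ _)
      _ = C * (∫ σ in (0:ℝ)..r, |x (t - σ)|) + 0 := by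
          rw [intervalIntegral.integral_comp_sub_left (fun σ => |x σ|), sub_zero,
            intervalIntegral.integral_const_mul, add_zero]
  have := integral_gronwall_le hC ht (hx.comp (continuous_sub_left t)).abs continuous_const
    (fun _ => le_rfl) key
  simpa using this

theorem pos_of_integral_eq_of_abs_le {x h : ℝ → ℝ} {t C : ℝ} (hx : Continuous x)
    (hx0 : 0 < x 0) (ht : 0 ≤ t) (hC : 0 ≤ C) (hh : IntervalIntegrable h volume 0 t)
    (heq : ∀ r ∈ Icc 0 t, x r = x 0 + ∫ τ in (0:ℝ)..r, h τ)
    (hbd : ∀ τ ∈ Icc 0 t, |h τ| ≤ C * |x τ|) : 0 < x t := by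
  by_contra! hxt
  obtain ⟨t₀, ht₀, hxt₀⟩ := intermediate_value_Icc' ht hx.continuousOn ⟨hxt, hx0.le⟩
  have hsub : Icc 0 t₀ ⊆ Icc 0 t := Icc_subset_Icc_right ht₀.2
  exact hx0.ne' <| eq_zero_of_integral_eq_of_abs_le hx ht₀.1 hC
    (hh.mono_set (uIcc_subset_uIcc_left (Icc_subset_uIcc ht₀))) (fun r hr => heq r (hsub hr))
    (fun τ hτ => hbd τ (hsub hτ)) hxt₀

theorem abs_mul_sub_mul_le {a b c d : ℝ} (ha : |a| ≤ 1) (hd : |d| ≤ 1) :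
    |a * b - c * d| ≤ |a - c| + |b - d| := by
  calc |a * b - c * d| = |a * (b - d) + d * (a - c)| := by ring_nf
    _ ≤ |a| * |b - d| + |d| * |a - c| := by rw [← abs_mul, ← abs_mul]; exact abs_add_le _ _
    _ ≤ |a - c| + |b - d| := by
        nlinarith [mul_le_mul_of_nonneg_right ha (abs_nonneg (b - d)),
          mul_le_mul_of_nonneg_right hd (abs_nonneg (a - c))]

theorem WeakStarLim.tendsto_intervalIntegral_mul {un : ℕ → ℝ → ℝ} {u g : ℝ → ℝ} {r : ℝ}
    (hweak : WeakStarLim un u) (hg : IntegrableOn g (Ioc 0 r)) (hr : 0 ≤ r) :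
    Tendsto (fun n => ∫ σ in (0:ℝ)..r, un n σ * g σ) atTop
      (𝓝 (∫ σ in (0:ℝ)..r, u σ * g σ)) := by
  have htest : ∀ w : ℝ → ℝ,
      ∫ t in Ioi 0, w t * (Ioc 0 r).indicator g t = ∫ σ in (0:ℝ)..r, w σ * g σ := by
    intro w
    simp_rw [← indicator_mul_right]
    rw [setIntegral_indicator measurableSet_Ioc, inter_eq_right.2 Ioc_subset_Ioi_self,
      intervalIntegral.integral_of_le hr]
  simpa only [htest] using hweak _ (hg.integrable_indicator measurableSet_Ioc).integrableOn

theorem cost_eq_iSup_costT (l1 l2 : ℝ) (u i : ℝ → ℝ) :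
    Cost l1 l2 u i = ⨆ M : ℕ, CostT l1 l2 M u i := by
  have hunion : ⋃ M : ℕ, Ioc (0:ℝ) M = Ioi 0 :=
    iUnion_Ioc_eq_Ioi_self_iff.2 fun x _ => exists_nat_ge x
  set μ := volume.withDensity fun t => ENNReal.ofReal (l1 * u t + l2 * i t)
  calc Cost l1 l2 u i = μ (⋃ M : ℕ, Ioc (0:ℝ) M) := by
        rw [hunion, withDensity_apply _ measurableSet_Ioi]; rfl
    _ = ⨆ M : ℕ, μ (Ioc 0 M) :=
        Monotone.measure_iUnion fun M N h => Ioc_subset_Ioc_right (Nat.mono_cast h)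
    _ = ⨆ M : ℕ, CostT l1 l2 M u i := by simp only [μ, withDensity_apply _ measurableSet_Ioc]; rfl

namespace IsControl

variable {umax : ℝ} {u v : ℝ → ℝ}

theorem nonneg (hu : IsControl umax u) : 0 ≤ umax :=
  (hu.2 0).1.trans (hu.2 0).2

theorem intervalIntegrable (hu : IsControl umax u) (a b : ℝ) :
    IntervalIntegrable u volume a b :=
  (intervalIntegrable_const (c := umax)).mono_fun' hu.1.aestronglyMeasurable
    (ae_of_all _ fun t => by
      show |u t| ≤ umax
      rw [abs_of_nonneg (hu.2 t).1]; exact (hu.2 t).2)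

theorem intervalIntegrable_incidence {β : ℝ} {s i : ℝ → ℝ} (hu : IsControl umax u)
    (hs : Continuous s) (hi : Continuous i) (a b : ℝ) :
    IntervalIntegrable (fun τ => (β - u τ) * s τ * i τ) volume a b :=
  ((intervalIntegrable_const.sub (hu.intervalIntegrable a b)).mul_continuousOn
    hs.continuousOn).mul_continuousOn hi.continuousOn

theorem abs_sub_le {β : ℝ} (hu : IsControl umax u) (hβ : umax ≤ β) (t : ℝ) :
    |β - u t| ≤ β := by
  obtain ⟨h0, h1⟩ := hu.2 t
  rw [abs_le]; constructor <;> linarith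

theorem abs_sub_sub_le (hu : IsControl umax u) (hv : IsControl umax v) (t : ℝ) :
    |u t - v t| ≤ umax := by
  obtain ⟨hu0, hu1⟩ := hu.2 t
  obtain ⟨hv0, hv1⟩ := hv.2 t
  rw [abs_le]; constructor <;> linarith

end IsControl

theorem WeakStarLim.tendsto_intervalIntegral_sub_mul {umax r : ℝ} {un : ℕ → ℝ → ℝ}
    {u g : ℝ → ℝ} (hweak : WeakStarLim un u) (hun : ∀ n, IsControl umax (un n))
    (hu : IsControl umax u) (hg : Continuous g) (hr : 0 ≤ r) :
    Tendsto (fun n => ∫ σ in (0:ℝ)..r, (un n σ - u σ) * g σ) atTop (𝓝 0) := by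
  have hsplit : ∀ n, ∫ σ in (0:ℝ)..r, (un n σ - u σ) * g σ =
      (∫ σ in (0:ℝ)..r, un n σ * g σ) - ∫ σ in (0:ℝ)..r, u σ * g σ := fun n => by
    rw [← intervalIntegral.integral_sub
      (((hun n).intervalIntegrable 0 r).mul_continuousOn hg.continuousOn)
      ((hu.intervalIntegrable 0 r).mul_continuousOn hg.continuousOn)]
    exact intervalIntegral.integral_congr fun σ _ => by ring
  simpa only [hsplit, sub_self] using
    (hweak.tendsto_intervalIntegral_mul hg.integrableOn_Ioc hr).sub_const
      (∫ σ in (0:ℝ)..r, u σ * g σ)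

theorem costT_eq_ofReal {l1 l2 umax T : ℝ} {u i : ℝ → ℝ} (hl1 : 0 ≤ l1) (hl2 : 0 ≤ l2)
    (hT : 0 ≤ T) (hu : IsControl umax u) (hi : Continuous i) (hi0 : ∀ t ∈ Ioc 0 T, 0 ≤ i t) :
    CostT l1 l2 T u i =
      ENNReal.ofReal (l1 * (∫ t in (0:ℝ)..T, u t) + l2 * ∫ t in (0:ℝ)..T, i t) := by
  have hu' := hu.intervalIntegrable 0 T
  have hi' := hi.intervalIntegrable (μ := volume) 0 T
  rw [← intervalIntegral.integral_const_mul, ← intervalIntegral.integral_const_mul,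
    ← intervalIntegral.integral_add (hu'.const_mul l1) (hi'.const_mul l2),
    intervalIntegral.integral_of_le hT, ofReal_integral_eq_lintegral_ofReal]
  · rfl
  · exact ((hu'.const_mul l1).add (hi'.const_mul l2)).1
  · exact (ae_restrict_mem measurableSet_Ioc).mono fun t ht =>
      add_nonneg (mul_nonneg hl1 (hu.2 t).1) (mul_nonneg hl2 (hi0 t ht))

theorem tendsto_costT {l1 l2 umax T : ℝ} {un : ℕ → ℝ → ℝ} {iN : ℕ → ℝ → ℝ} {u i : ℝ → ℝ}
    (hl1 : 0 ≤ l1) (hl2 : 0 ≤ l2) (hT : 0 ≤ T) (hun : ∀ n, IsControl umax (un n))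
    (hu : IsControl umax u) (hweak : WeakStarLim un u) (hiN : ∀ n, Continuous (iN n))
    (hi : Continuous i) (hbd : ∀ n, ∀ t ∈ Ioc 0 T, 0 ≤ iN n t ∧ iN n t ≤ 1)
    (hlim : ∀ t ∈ Ioc 0 T, Tendsto (fun n => iN n t) atTop (𝓝 (i t))) :
    Tendsto (fun n => CostT l1 l2 T (un n) (iN n)) atTop (𝓝 (CostT l1 l2 T u i)) := by
  have hi0 : ∀ t ∈ Ioc 0 T, 0 ≤ i t := fun t ht =>
    ge_of_tendsto' (hlim t ht) fun n => (hbd n t ht).1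
  simp only [costT_eq_ofReal hl1 hl2 hT (hun _) (hiN _) fun t ht => (hbd _ t ht).1,
    costT_eq_ofReal hl1 hl2 hT hu hi hi0]
  refine ENNReal.tendsto_ofReal (Tendsto.add (Tendsto.const_mul _ ?_) (Tendsto.const_mul _ ?_))
  · simpa only [mul_one] using
      hweak.tendsto_intervalIntegral_mul (g := fun _ => 1)
        (integrableOn_const measure_Ioc_lt_top.ne) hT
  · refine intervalIntegral.tendsto_integral_filter_of_dominated_convergence (fun _ => 1)
      (Eventually.of_forall fun n => (hiN n).aestronglyMeasurable)
      (Eventually.of_forall fun n => ae_of_all _ fun t ht => ?_) intervalIntegrable_const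
      (ae_of_all _ fun t ht => hlim t (by rwa [uIoc_of_le hT] at ht))
    rw [uIoc_of_le hT] at ht
    rw [Real.norm_eq_abs, abs_of_nonneg (hbd n t ht).1]
    exact (hbd n t ht).2

namespace SIRSol

variable {β γ umax s₀ i₀ : ℝ} {u s i u₁ u₂ s₁ i₁ s₂ i₂ : ℝ → ℝ} {un sn iN : ℕ → ℝ → ℝ}

theorem sirSolOn (h : SIRSol β γ u s i s₀ i₀) (T : ℝ) :
    SIRSolOn β γ T u s i s₀ i₀ :=
  ⟨h.1.continuousOn, h.2.1.continuousOn, fun t ht => h.2.2.1 t ht.1, fun t ht => h.2.2.2 t ht.1⟩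

theorem pos (hγ : 0 ≤ γ) (humax : umax ≤ β) (hu : IsControl umax u)
    (hsol : SIRSol β γ u s i s₀ i₀) (hs₀ : 0 < s₀) (hi₀ : 0 < i₀) {t : ℝ} (ht : 0 ≤ t) :
    0 < s t ∧ 0 < i t := by
  obtain ⟨hs, hi, hseq, hieq⟩ := hsol
  have hs0 : s 0 = s₀ := by simpa using hseq 0 le_rfl
  have hi0 : i 0 = i₀ := by simpa using hieq 0 le_rfl
  have hβ : 0 ≤ β := hu.nonneg.trans humax
  obtain ⟨Ms, hsMs⟩ := isCompact_Icc.exists_bound_of_continuousOn (hs.continuousOn (s := Icc 0 t))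
  obtain ⟨Mi, hiMi⟩ := isCompact_Icc.exists_bound_of_continuousOn (hi.continuousOn (s := Icc 0 t))
  have hMs : 0 ≤ Ms := (norm_nonneg _).trans (hsMs 0 (left_mem_Icc.2 ht))
  have hMi : 0 ≤ Mi := (norm_nonneg _).trans (hiMi 0 (left_mem_Icc.2 ht))
  constructor
  · refine pos_of_integral_eq_of_abs_le (h := fun τ => -((β - u τ) * s τ * i τ)) hs (hs0 ▸ hs₀)
      ht (mul_nonneg hβ hMi) (hu.intervalIntegrable_incidence hs hi 0 t).neg
      (fun r hr => hs0 ▸ hseq r hr.1) fun τ hτ => ?_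
    rw [abs_neg, abs_mul, abs_mul, mul_right_comm]
    gcongr
    exacts [hu.abs_sub_le humax τ, hiMi τ hτ]
  · refine pos_of_integral_eq_of_abs_le hi (hi0 ▸ hi₀) ht (add_nonneg (mul_nonneg hβ hMs) hγ)
      ((hu.intervalIntegrable_incidence hs hi 0 t).sub
        ((hi.intervalIntegrable _ _).const_mul γ)) (fun r hr => hi0 ▸ hieq r hr.1)
      fun τ hτ => ?_
    calc |(β - u τ) * s τ * i τ - γ * i τ| ≤ |β - u τ| * |s τ| * |i τ| + γ * |i τ| := by
          rw [← abs_mul, ← abs_mul, ← abs_of_nonneg hγ, ← abs_mul, abs_of_nonneg hγ]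
          exact abs_sub _ _
      _ ≤ (β * Ms + γ) * |i τ| := by
          rw [add_mul]
          gcongr
          exacts [hu.abs_sub_le humax τ, hsMs τ hτ]

theorem abs_le_one (hγ : 0 ≤ γ) (humax : umax ≤ β) (hu : IsControl umax u)
    (hsol : SIRSol β γ u s i s₀ i₀) (h₀ : (s₀, i₀) ∈ Triangle) {t : ℝ} (ht : 0 ≤ t) :
    |s t| ≤ 1 ∧ |i t| ≤ 1 := by
  obtain ⟨hs₀, -, hi₀, -, hsum⟩ := h₀
  have hpos := fun {τ} (hτ : 0 ≤ τ) => hsol.pos hγ humax hu hs₀ hi₀ hτ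
  obtain ⟨hs, hi, hseq, hieq⟩ := hsol
  have hinc := hu.intervalIntegrable_incidence (β := β) hs hi 0 t
  -- the incidence terms cancel in `s + i`, which therefore decreases
  have hsum_eq : s t + i t = s₀ + i₀ - ∫ τ in (0:ℝ)..t, γ * i τ := by
    rw [hseq t ht, hieq t ht, intervalIntegral.integral_neg,
      intervalIntegral.integral_sub hinc ((hi.intervalIntegrable _ _).const_mul γ)]
    ring
  have hloss : 0 ≤ ∫ τ in (0:ℝ)..t, γ * i τ :=
    intervalIntegral.integral_nonneg ht fun τ hτ => mul_nonneg hγ (hpos hτ.1).2.le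
  obtain ⟨hst, hit⟩ := hpos ht
  rw [abs_of_pos hst, abs_of_pos hit]
  constructor <;> linarith

theorem abs_sub_add_abs_sub_le (hγ : 0 ≤ γ) (humax : umax ≤ β) (hu₁ : IsControl umax u₁)
    (hu₂ : IsControl umax u₂) (hsol₁ : SIRSol β γ u₁ s₁ i₁ s₀ i₀)
    (hsol₂ : SIRSol β γ u₂ s₂ i₂ s₀ i₀) (h₀ : (s₀, i₀) ∈ Triangle) {r : ℝ} (hr : 0 ≤ r) :
    |s₁ r - s₂ r| + |i₁ r - i₂ r| ≤
      (2 * β + γ) * (∫ σ in (0:ℝ)..r, (|s₁ σ - s₂ σ| + |i₁ σ - i₂ σ|)) +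
        2 * |∫ σ in (0:ℝ)..r, (u₁ σ - u₂ σ) * (s₂ σ * i₂ σ)| := by
  have hbd₁ := fun {τ} (hτ : 0 ≤ τ) => hsol₁.abs_le_one hγ humax hu₁ h₀ hτ
  have hbd₂ := fun {τ} (hτ : 0 ≤ τ) => hsol₂.abs_le_one hγ humax hu₂ h₀ hτ
  obtain ⟨hs₁, hi₁, hseq₁, hieq₁⟩ := hsol₁
  obtain ⟨hs₂, hi₂, hseq₂, hieq₂⟩ := hsol₂
  set e := fun σ => |s₁ σ - s₂ σ| + |i₁ σ - i₂ σ| with he_def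
  set A := ∫ σ in (0:ℝ)..r, (u₁ σ - u₂ σ) * (s₂ σ * i₂ σ)
  have he : Continuous e := by fun_prop
  have hΔ : ∀ τ ∈ Ioc 0 r, |s₁ τ * i₁ τ - s₂ τ * i₂ τ| ≤ e τ := fun τ hτ =>
    abs_mul_sub_mul_le (hbd₁ hτ.1.le).1 (hbd₂ hτ.1.le).2
  have hinc₁ := hu₁.intervalIntegrable_incidence (β := β) hs₁ hi₁ 0 r
  have hinc₂ := hu₂.intervalIntegrable_incidence (β := β) hs₂ hi₂ 0 r
  have hS₁ : IntervalIntegrable (fun τ => -((β - u₁ τ) * s₁ τ * i₁ τ)) volume 0 r := hinc₁.neg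
  have hS₂ : IntervalIntegrable (fun τ => -((β - u₂ τ) * s₂ τ * i₂ τ)) volume 0 r := hinc₂.neg
  have hI₁ : IntervalIntegrable (fun τ => (β - u₁ τ) * s₁ τ * i₁ τ - γ * i₁ τ) volume 0 r :=
    hinc₁.sub ((hi₁.intervalIntegrable _ _).const_mul γ)
  have hI₂ : IntervalIntegrable (fun τ => (β - u₂ τ) * s₂ τ * i₂ τ - γ * i₂ τ) volume 0 r :=
    hinc₂.sub ((hi₂.intervalIntegrable _ _).const_mul γ)
  have hA : IntervalIntegrable (fun σ => (u₁ σ - u₂ σ) * (s₂ σ * i₂ σ)) volume 0 r :=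
    ((hu₁.intervalIntegrable 0 r).sub (hu₂.intervalIntegrable 0 r)).mul_continuousOn
      (hs₂.mul hi₂).continuousOn
  have hs_eq : s₁ r - s₂ r - A =
      ∫ τ in (0:ℝ)..r, -((β - u₁ τ) * (s₁ τ * i₁ τ - s₂ τ * i₂ τ)) := by
    rw [hseq₁ r hr, hseq₂ r hr, add_sub_add_left_eq_sub,
      ← intervalIntegral.integral_sub hS₁ hS₂, ← intervalIntegral.integral_sub (hS₁.sub hS₂) hA]
    exact intervalIntegral.integral_congr fun τ _ => by ring
  have hi_eq : i₁ r - i₂ r + A = ∫ τ in (0:ℝ)..r,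
      ((β - u₁ τ) * (s₁ τ * i₁ τ - s₂ τ * i₂ τ) - γ * (i₁ τ - i₂ τ)) := by
    rw [hieq₁ r hr, hieq₂ r hr, add_sub_add_left_eq_sub,
      ← intervalIntegral.integral_sub hI₁ hI₂, ← intervalIntegral.integral_add (hI₁.sub hI₂) hA]
    exact intervalIntegral.integral_congr fun τ _ => by ring
  have hs_le : |s₁ r - s₂ r - A| ≤ β * ∫ σ in (0:ℝ)..r, e σ := by
    rw [hs_eq, ← intervalIntegral.integral_const_mul, ← Real.norm_eq_abs]
    refine norm_integral_le_of_norm_le hr (ae_of_all _ fun τ hτ => ?_)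
      ((he.intervalIntegrable _ _).const_mul β)
    rw [Real.norm_eq_abs, abs_neg, abs_mul]
    exact mul_le_mul (hu₁.abs_sub_le humax τ) (hΔ τ hτ) (abs_nonneg _)
      ((abs_nonneg _).trans (hu₁.abs_sub_le humax τ))
  have hi_le : |i₁ r - i₂ r + A| ≤ (β + γ) * ∫ σ in (0:ℝ)..r, e σ := by
    rw [hi_eq, ← intervalIntegral.integral_const_mul, ← Real.norm_eq_abs]
    refine norm_integral_le_of_norm_le hr (ae_of_all _ fun τ hτ => ?_)
      ((he.intervalIntegrable _ _).const_mul (β + γ))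
    have hinc : |β - u₁ τ| * |s₁ τ * i₁ τ - s₂ τ * i₂ τ| ≤ β * e τ :=
      mul_le_mul (hu₁.abs_sub_le humax τ) (hΔ τ hτ) (abs_nonneg _)
        ((abs_nonneg _).trans (hu₁.abs_sub_le humax τ))
    have hrec : γ * |i₁ τ - i₂ τ| ≤ γ * e τ :=
      mul_le_mul_of_nonneg_left (le_add_of_nonneg_left (abs_nonneg _)) hγ
    rw [Real.norm_eq_abs]
    calc _ ≤ |β - u₁ τ| * |s₁ τ * i₁ τ - s₂ τ * i₂ τ| + γ * |i₁ τ - i₂ τ| := by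
          rw [← abs_mul, ← abs_of_nonneg hγ, ← abs_mul, abs_of_nonneg hγ]; exact abs_sub _ _
      _ ≤ (β + γ) * e τ := by linarith
  have := abs_sub_abs_le_abs_sub (s₁ r - s₂ r) A
  have := abs_sub_abs_le_abs_sub (i₁ r - i₂ r) (-A)
  rw [sub_neg_eq_add, abs_neg] at this
  linarith

theorem abs_integral_sub_mul_le (hγ : 0 ≤ γ) (humax : umax ≤ β) (hu₁ : IsControl umax u₁)
    (hu₂ : IsControl umax u₂) (hsol : SIRSol β γ u₂ s i s₀ i₀) (h₀ : (s₀, i₀) ∈ Triangle)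
    {r : ℝ} (hr : 0 ≤ r) :
    |∫ σ in (0:ℝ)..r, (u₁ σ - u₂ σ) * (s σ * i σ)| ≤ umax * r := by
  have := intervalIntegral.norm_integral_le_of_norm_le_const (a := 0) (b := r)
    (f := fun σ => (u₁ σ - u₂ σ) * (s σ * i σ)) (C := umax) fun σ hσ => by
      rw [uIoc_of_le hr] at hσ
      obtain ⟨hs1, hi1⟩ := hsol.abs_le_one hγ humax hu₂ h₀ hσ.1.le
      rw [Real.norm_eq_abs, abs_mul, abs_mul, ← mul_one umax]
      exact mul_le_mul (hu₁.abs_sub_sub_le hu₂ σ) (mul_le_one₀ hs1 (abs_nonneg _) hi1)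
        (by positivity) hu₁.nonneg
  rwa [sub_zero, abs_of_nonneg hr] at this

theorem tendsto_of_weakStarLim (hγ : 0 ≤ γ) (humax : umax ≤ β)
    (hun : ∀ n, IsControl umax (un n)) (hu : IsControl umax u)
    (hsoln : ∀ n, SIRSol β γ (un n) (sn n) (iN n) s₀ i₀) (hsol : SIRSol β γ u s i s₀ i₀)
    (h₀ : (s₀, i₀) ∈ Triangle) (hweak : WeakStarLim un u) {t : ℝ} (ht : 0 ≤ t) :
    Tendsto (fun n => iN n t) atTop (𝓝 (i t)) := by
  set A := fun n r => ∫ σ in (0:ℝ)..r, (un n σ - u σ) * (s σ * i σ)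
  have hA_tendsto : ∀ r, 0 ≤ r → Tendsto (fun n => A n r) atTop (𝓝 0) := fun r hr =>
    hweak.tendsto_intervalIntegral_sub_mul hun hu (hsol.1.mul hsol.2.1) hr
  have hφ : ∀ n, Continuous fun r => 2 * |A n r| := fun n =>
    continuous_const.mul (intervalIntegral.continuous_primitive (fun a b =>
      (((hun n).intervalIntegrable a b).sub (hu.intervalIntegrable a b)).mul_continuousOn
        (hsol.1.mul hsol.2.1).continuousOn) 0).abs
  have hA_int : Tendsto (fun n => ∫ σ in (0:ℝ)..t, 2 * |A n σ|) atTop (𝓝 0) := by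
    simpa using intervalIntegral.tendsto_integral_filter_of_dominated_convergence
      (f := fun _ => 0) (fun _ => 2 * (umax * t))
      (Eventually.of_forall fun n => (hφ n).aestronglyMeasurable)
      (Eventually.of_forall fun n => ae_of_all _ fun σ hσ => by
        rw [uIoc_of_le ht] at hσ
        rw [Real.norm_eq_abs, abs_of_nonneg (by positivity)]
        have := hsol.abs_integral_sub_mul_le hγ humax (hun n) hu h₀ hσ.1.le
        nlinarith [hσ.2, hu.nonneg])
      intervalIntegrable_const
      (ae_of_all _ fun σ hσ => by
        rw [uIoc_of_le ht] at hσ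
        simpa using (hA_tendsto σ hσ.1.le).abs.const_mul 2)
  have hβ : 0 ≤ β := hu.nonneg.trans humax
  have hgronwall : ∀ n, |sn n t - s t| + |iN n t - i t| ≤
      (2 * β + γ) * Real.exp ((2 * β + γ) * t) * (∫ σ in (0:ℝ)..t, 2 * |A n σ|) +
        2 * |A n t| := fun n =>
    integral_gronwall_le (by positivity) ht
      (((hsoln n).1.sub hsol.1).abs.add ((hsoln n).2.1.sub hsol.2.1).abs) (hφ n)
      (fun _ => by positivity)
      fun r hr => (hsoln n).abs_sub_add_abs_sub_le hγ humax (hun n) hu hsol h₀ hr.1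
  have hbound : Tendsto (fun n => (2 * β + γ) * Real.exp ((2 * β + γ) * t) *
      (∫ σ in (0:ℝ)..t, 2 * |A n σ|) + 2 * |A n t|) atTop (𝓝 0) := by
    simpa using (hA_int.const_mul _).add ((hA_tendsto t ht).abs.const_mul 2)
  refine tendsto_iff_norm_sub_tendsto_zero.2 (squeeze_zero (fun n => norm_nonneg _)
    (fun n => ?_) hbound)
  rw [Real.norm_eq_abs]
  linarith [hgronwall n, abs_nonneg (sn n t - s t)]

end SIRSol

theorem statement16_general (β γ umax iM l1 l2 : ℝ) (hγ : 0 < γ)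
    (humaxβ : umax < β)
    (hl1 : 0 < l1) (hl2 : 0 ≤ l2)
    (s₀ i₀ : ℝ) (hB : (s₀, i₀) ∈ ViableSet β γ umax iM)
    (Tn : ℕ → ℝ)
    (hTtop : Filter.Tendsto Tn Filter.atTop Filter.atTop)
    (un : ℕ → ℝ → ℝ) (sn iN : ℕ → ℝ → ℝ) (u s i : ℝ → ℝ)
    (hun : ∀ n, IsControl umax (un n))
    (hsoln : ∀ n, SIRSol β γ (un n) (sn n) (iN n) s₀ i₀)
    (hadmn : ∀ n, ∀ t ∈ Set.Icc (0:ℝ) (Tn n), iN n t ≤ iM)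
    (hoptn : ∀ n, ∀ v sv iv : ℝ → ℝ, IsControl umax v →
      SIRSolOn β γ (Tn n) v sv iv s₀ i₀ → (∀ t ∈ Set.Icc (0:ℝ) (Tn n), iv t ≤ iM) →
      CostT l1 l2 (Tn n) (un n) (iN n) ≤ CostT l1 l2 (Tn n) v iv)
    (hu : IsControl umax u) (hsol : SIRSol β γ u s i s₀ i₀)
    (hweak : WeakStarLim un u) :
    Admissible iM i ∧
    ∀ v sv iv : ℝ → ℝ, IsControl umax v → SIRSol β γ v sv iv s₀ i₀ →
      Admissible iM iv → Cost l1 l2 u i ≤ Cost l1 l2 v iv := by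
  have h₀ := hB.1
  have hlim : ∀ t, 0 ≤ t → Tendsto (fun n => iN n t) atTop (𝓝 (i t)) := fun t ht =>
    SIRSol.tendsto_of_weakStarLim hγ.le humaxβ.le hun hu hsoln hsol h₀ hweak ht
  refine ⟨fun t ht => le_of_tendsto (hlim t ht)
    ((hTtop.eventually_ge_atTop t).mono fun n hn => hadmn n t ⟨ht, hn⟩), ?_⟩
  intro v sv iv hv hsolv hadmv
  have hiN_mem : ∀ n t, 0 ≤ t → 0 ≤ iN n t ∧ iN n t ≤ 1 := fun n t ht =>
    ⟨((hsoln n).pos hγ.le humaxβ.le (hun n) h₀.1 h₀.2.2.1 ht).2.le,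
      (abs_le.1 ((hsoln n).abs_le_one hγ.le humaxβ.le (hun n) h₀ ht).2).2⟩
  rw [cost_eq_iSup_costT]
  refine iSup_le fun M => le_of_tendsto (tendsto_costT hl1.le hl2 M.cast_nonneg hun hu hweak
    (fun n => (hsoln n).2.1) hsol.2.1 (fun n t ht => hiN_mem n t ht.1.le)
    fun t ht => hlim t ht.1.le) ?_
  filter_upwards [hTtop.eventually_ge_atTop (M : ℝ)] with n hn
  calc CostT l1 l2 M (un n) (iN n) ≤ CostT l1 l2 (Tn n) (un n) (iN n) :=
        lintegral_mono_set (Ioc_subset_Ioc_right hn)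
    _ ≤ CostT l1 l2 (Tn n) v iv :=
        hoptn n v sv iv hv (hsolv.sirSolOn (Tn n)) fun t ht => hadmv t ht.1
    _ ≤ Cost l1 l2 v iv := lintegral_mono_set Ioc_subset_Ioi_self

/-- Variational property of the Γ-convergence: a weak* limit of finite-horizon optimal
controls (extended by `0`) is optimal for the infinite-horizon problem `P^∞_{λ₁,λ₂}`. -/
theorem statement16 (β γ umax iM l1 l2 : ℝ) (hβ : 0 < β) (hγ : 0 < γ)
    (humax : 0 < umax) (humaxβ : umax < β) (hiM : iM ∈ Set.Ioo (0:ℝ) 1)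
    (hl1 : 0 < l1) (hl2 : 0 ≤ l2)
    (s₀ i₀ : ℝ) (hB : (s₀, i₀) ∈ ViableSet β γ umax iM) (hi₀ : 0 < i₀)
    (Tn : ℕ → ℝ) (hTn0 : ∀ n, 0 < Tn n)
    (hTtop : Filter.Tendsto Tn Filter.atTop Filter.atTop)
    (un : ℕ → ℝ → ℝ) (sn iN : ℕ → ℝ → ℝ) (u s i : ℝ → ℝ)
    (hun : ∀ n, IsControl umax (un n))
    (hzero : ∀ n, ∀ t : ℝ, Tn n < t → un n t = 0)
    (hsoln : ∀ n, SIRSol β γ (un n) (sn n) (iN n) s₀ i₀)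
    (hadmn : ∀ n, ∀ t ∈ Set.Icc (0:ℝ) (Tn n), iN n t ≤ iM)
    (hoptn : ∀ n, ∀ v sv iv : ℝ → ℝ, IsControl umax v →
      SIRSolOn β γ (Tn n) v sv iv s₀ i₀ → (∀ t ∈ Set.Icc (0:ℝ) (Tn n), iv t ≤ iM) →
      CostT l1 l2 (Tn n) (un n) (iN n) ≤ CostT l1 l2 (Tn n) v iv)
    (hu : IsControl umax u) (hsol : SIRSol β γ u s i s₀ i₀)
    (hweak : WeakStarLim un u) :
    Admissible iM i ∧
    ∀ v sv iv : ℝ → ℝ, IsControl umax v → SIRSol β γ v sv iv s₀ i₀ →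
      Admissible iM iv → Cost l1 l2 u i ≤ Cost l1 l2 v iv :=
  statement16_general β γ umax iM l1 l2 hγ humaxβ hl1 hl2 s₀ i₀ hB Tn hTtop un sn iN u s i hun hsoln
    hadmn hoptn hu hsol hweak
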